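/- (Approachability) Let H and H' be bounded histories and, for p > 0, let H_p∗H' denote the concatenated history (H_p∗H')(s) := H(s) for 0 ≤ s < p and := H'(s−p) for s ≥ p (H_p being the process of duration p generated by H on [0,p)). Then lim_{p→+∞} d(H_p∗H', H) = 0. -/

import Mathlib

open MeasureTheory Filter Topology
open scoped ENNReal Classical

noncomputable section

/-- The state space `V = M₃ₓ₃(ℝ) × ℝᵏ × M_{k×3}(ℝ)`, each factor Euclidean. -/
abbrev V (k : ℕ) :=
  EuclideanSpace ℝ (Fin 3 × Fin 3) × EuclideanSpace ℝ (Fin k) ×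
    EuclideanSpace ℝ (Fin k × Fin 3)

/-- The norm `‖v‖ := |v_W| + |v_ν| + |v_N|`. -/
def vnorm {k : ℕ} (v : V k) : ℝ := ‖v.1‖ + ‖v.2.1‖ + ‖v.2.2‖

/-- The inner product of the Euclidean factors. -/
def vinner {k : ℕ} (v w : V k) : ℝ :=
  (inner ℝ v.1 w.1 : ℝ) + (inner ℝ v.2.1 w.2.1 : ℝ) + (inner ℝ v.2.2 w.2.2 : ℝ)

/-- The operator norm on `End(V)` corresponding to `vnorm`. -/
def opnorm {k : ℕ} (A : V k →L[ℝ] V k) : ℝ :=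
  sSup ((fun v => vnorm (A v)) '' {v : V k | vnorm v ≤ 1})

/-- A history: a bounded, right-continuous map `[0,∞) → V` of bounded variation. -/
structure IsHistory {k : ℕ} (H : ℝ → V k) : Prop where
  bounded : ∃ C : ℝ, ∀ s : ℝ, 0 ≤ s → vnorm (H s) ≤ C
  rightCont : ∀ s : ℝ, 0 ≤ s → ContinuousWithinAt H (Set.Ici s) s
  bv : BoundedVariationOn H (Set.Ici 0)

/-- The relaxation function `G` is absolutely continuous with Bochner-integrable
derivative `G'` on `[0,∞)`. -/
structure IsRelaxation {k : ℕ} (G G' : ℝ → (V k →L[ℝ] V k)) : Prop where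
  integrable : IntegrableOn G' (Set.Ici 0)
  ftc : ∀ t : ℝ, 0 ≤ t → G t = G 0 + ∫ s in Set.Icc (0:ℝ) t, G' s

/-- The distance `d(H,H') := sup_{t>0} ‖∫₀^∞ Ġ(s+t)(H(s) − H'(s)) ds‖`. -/
def hdist {k : ℕ} (G' : ℝ → (V k →L[ℝ] V k)) (H H' : ℝ → V k) : ℝ≥0∞ :=
  ⨆ t : Set.Ioi (0:ℝ), ENNReal.ofReal
    (vnorm (∫ s in Set.Ioi (0:ℝ), (G' (s + (t:ℝ))) (H s - H' s)))

/-- The response functional `Λ(H) := G(0)H(0) + ∫₀^∞ Ġ(s)H(s) ds`. -/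
def response {k : ℕ} (G G' : ℝ → (V k →L[ℝ] V k)) (H : ℝ → V k) : V k :=
  (G 0) (H 0) + ∫ s in Set.Ioi (0:ℝ), (G' s) (H s)

/-- The prolongation `K_p∗H` of a history `H` by a process `K` of duration `p`. -/
def prolong {k : ℕ} (p : ℝ) (K H : ℝ → V k) : ℝ → V k :=
  fun s => if s < p then K s else H (s - p)

/-- `K` (of duration `p`) prolongs `H`: `lim_{s↗p} K(s) = H(0)`. -/
def Prolongs {k : ℕ} (p : ℝ) (K H : ℝ → V k) : Prop :=
  Tendsto K (𝓝[<] p) (𝓝 (H 0))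

/-- Equivalence of histories: same initial value and equal responses under every
prolongation. -/
def EquivHist {k : ℕ} (G G' : ℝ → (V k →L[ℝ] V k)) (H H' : ℝ → V k) : Prop :=
  H 0 = H' 0 ∧ ∀ p : ℝ, 0 < p → ∀ K : ℝ → V k, Prolongs p K H →
    response G G' (prolong p K H) = response G G' (prolong p K H')

/-- The shifted history `Hˢ(u) := H(s+u)`. -/
def shift {k : ℕ} (H : ℝ → V k) (s : ℝ) : ℝ → V k := fun u => H (s + u)

/-- The work density `w(H) := ∫₀^∞ ⟨Λ(Hˢ), Ḣ(s)⟩ ds` of a differentiable history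
`H` with derivative `Hd`. -/
def work {k : ℕ} (G G' : ℝ → (V k →L[ℝ] V k)) (H Hd : ℝ → V k) : ℝ :=
  ∫ s in Set.Ioi (0:ℝ), vinner (response G G' (shift H s)) (Hd s)

/-- A differentiable history: locally absolutely continuous with derivative
`Hd ∈ L¹`. -/
structure IsDiffHistory {k : ℕ} (H Hd : ℝ → V k) : Prop where
  hist : IsHistory H
  integrable : IntegrableOn Hd (Set.Ici 0)
  ftc : ∀ t : ℝ, 0 ≤ t → H t = H 0 + ∫ s in Set.Icc (0:ℝ) t, Hd s

/-- A differentiable process of duration `p` with derivative `Kd`. -/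
structure IsDiffProcess {k : ℕ} (p : ℝ) (K Kd : ℝ → V k) : Prop where
  pos : 0 < p
  integrable : IntegrableOn Kd (Set.Icc 0 p)
  ftc : ∀ t : ℝ, 0 ≤ t → t < p → K t = K 0 + ∫ s in Set.Icc (0:ℝ) t, Kd s

/-- The work over a prolongation: `w(K_p, H) := w(K_p∗H) − w(H)`. -/
def workP {k : ℕ} (G G' : ℝ → (V k →L[ℝ] V k)) (p : ℝ) (K Kd H Hd : ℝ → V k) : ℝ :=
  work G G' (prolong p K H) (prolong p Kd Hd) - work G G' H Hd

/-- The relaxed work `w^r_{H'}(H)` from the differentiable history `H'`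
(with derivative `H'd`) to the history `H`. -/
def relaxedWork {k : ℕ} (G G' : ℝ → (V k →L[ℝ] V k)) (H' H'd H : ℝ → V k) : EReal :=
  sInf { c : EReal | ∃ K Kd : ℝ → ℝ → V k,
    (∀ p : ℝ, 0 < p → IsDiffProcess p (K p) (Kd p) ∧ Prolongs p (K p) H') ∧
    Tendsto (fun p => hdist G' (prolong p (K p) H') H) atTop (𝓝 0) ∧
    c = Filter.liminf (fun p => ((workP G G' p (K p) (Kd p) H' H'd : ℝ) : EReal)) atTop }

/-- `H` is `w`-approachable from `H'`: there is a family of processes prolonging `H'`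
approaching `H` in the distance `d`, along which the work converges. -/
def WApproachable {k : ℕ} (G G' : ℝ → (V k →L[ℝ] V k)) (H' H'd H : ℝ → V k) : Prop :=
  ∃ K Kd : ℝ → ℝ → V k, ∃ L : ℝ,
    (∀ p : ℝ, 0 < p → IsDiffProcess p (K p) (Kd p) ∧ Prolongs p (K p) H') ∧
    Tendsto (fun p => hdist G' (prolong p (K p) H') H) atTop (𝓝 0) ∧
    Tendsto (fun p => workP G G' p (K p) (Kd p) H' H'd) atTop (𝓝 L)

/-- `Q(v) := ½⟨G(∞)v, v⟩`. -/
def Qform {k : ℕ} (Ginf : V k →L[ℝ] V k) (v : V k) : ℝ := (1/2) * vinner (Ginf v) v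

/-- The relaxation function is dissipative: `w(H) ≥ 0` for every differentiable
history with `H(∞) = 0`. -/
def DissipativeRelax {k : ℕ} (G G' : ℝ → (V k →L[ℝ] V k)) : Prop :=
  ∀ H Hd : ℝ → V k, IsDiffHistory H Hd → Tendsto H atTop (𝓝 (0 : V k)) →
    0 ≤ work G G' H Hd

/-- `w` satisfies the dissipation property along the history `H`. -/
def DissipationProperty {k : ℕ} (G G' : ℝ → (V k →L[ℝ] V k)) (H Hd : ℝ → V k) : Prop :=
  ∀ ε : ℝ, 0 < ε → ∃ δ : ℝ, 0 < δ ∧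
    ∀ p : ℝ, ∀ K Kd : ℝ → V k, IsDiffProcess p K Kd → Prolongs p K H →
      hdist G' (prolong p K H) H < ENNReal.ofReal δ → -ε < workP G G' p K Kd H Hd

/-- A free energy (lower potential for the work `w`). -/
def IsFreeEnergy {k : ℕ} (G G' : ℝ → (V k →L[ℝ] V k)) (ψ : (ℝ → V k) → EReal) : Prop :=
  ∀ H Hd H' H'd : ℝ → V k, IsDiffHistory H Hd → IsDiffHistory H' H'd →
    ∀ ε : ℝ, 0 < ε → ∃ δ : ℝ, 0 < δ ∧
      ∀ p : ℝ, ∀ K Kd : ℝ → V k, IsDiffProcess p K Kd → Prolongs p K H' →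
        hdist G' (prolong p K H') H < ENNReal.ofReal δ →
        ψ H - ψ H' < ((workP G G' p K Kd H' H'd + ε : ℝ) : EReal)

/-
For `s < p` the concatenation `H_p∗H'` agrees with `H`, so the integrand of `d(H_p∗H', H)` at
time `t > 0` vanishes there, while for `s ≥ p` it is bounded by
`(sup ‖H'‖ + sup ‖H‖) ‖Ġ(s+t)‖`.
Hence `d(H_p∗H', H)` is at most a constant times the tail `∫_p^∞ ‖Ġ‖`, which tends to `0`
because `Ġ` is integrable.
-/

open Set

section Norms

variable {k : ℕ}

lemma norm_le_vnorm (v : V k) : ‖v‖ ≤ vnorm v := by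
  rw [Prod.norm_def, Prod.norm_def]
  unfold vnorm
  have := norm_nonneg v.1
  have := norm_nonneg v.2.1
  have := norm_nonneg v.2.2
  exact max_le (by linarith) (max_le (by linarith) (by linarith))

lemma vnorm_le_three_mul_norm (v : V k) : vnorm v ≤ 3 * ‖v‖ := by
  have := norm_fst_le v
  have := norm_snd_le v
  have := norm_fst_le v.2
  have := norm_snd_le v.2
  unfold vnorm
  linarith

lemma IsHistory.exists_norm_le {H : ℝ → V k} (hH : IsHistory H) :
    ∃ C : ℝ, ∀ s : ℝ, 0 ≤ s → ‖H s‖ ≤ C := by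
  obtain ⟨C, hC⟩ := hH.bounded
  exact ⟨C, fun s hs => (norm_le_vnorm _).trans (hC s hs)⟩

lemma hdist_le_ofReal {G' : ℝ → (V k →L[ℝ] V k)} {H H' : ℝ → V k} {b : ℝ}
    (h : ∀ t : ℝ, 0 < t → vnorm (∫ s in Ioi (0:ℝ), (G' (s + t)) (H s - H' s)) ≤ b) :
    hdist G' H H' ≤ ENNReal.ofReal b :=
  iSup_le fun t => ENNReal.ofReal_le_ofReal (h t t.2)

end Norms

section Prolong

variable {k : ℕ} {p s : ℝ} {K H : ℝ → V k}

lemma prolong_of_lt (hs : s < p) : prolong p K H s = K s := if_pos hs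

lemma prolong_of_le (hs : p ≤ s) : prolong p K H s = H (s - p) := if_neg (not_lt.2 hs)

end Prolong

section ShiftedKernel

variable {E F : Type*} [NormedAddCommGroup E] [NormedSpace ℝ E]
  [NormedAddCommGroup F] [NormedSpace ℝ F]

lemma norm_setIntegral_apply_comp_add_le {A : ℝ → E →L[ℝ] F} {f : ℝ → E} {p t M : ℝ}
    (S : Set ℝ) (hA : IntegrableOn A (Ici p)) (ht : 0 ≤ t)
    (hf_lt : ∀ s, s < p → f s = 0) (hf_ge : ∀ s, p ≤ s → ‖f s‖ ≤ M) :
    ‖∫ s in S, A (s + t) (f s)‖ ≤ M * ∫ u in Ici p, ‖A u‖ := by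
  have hM : 0 ≤ M := (norm_nonneg _).trans (hf_ge p le_rfl)
  have hA_norm : IntegrableOn (fun u => ‖A u‖) (Ici p) := hA.norm
  have hpt : p ≤ p + t := le_add_of_nonneg_right ht
  set normTail : ℝ → ℝ := (Ici (p + t)).indicator fun u => ‖A u‖
  have hnormTail_int : Integrable normTail :=
    (integrable_indicator_iff measurableSet_Ici).2
      (hA_norm.mono_set (Ici_subset_Ici.2 hpt))
  have hnormTail_nonneg : ∀ u, 0 ≤ normTail u :=
    fun u => indicator_nonneg (fun _ _ => norm_nonneg _) u
  have hbound_int : Integrable fun s => M * normTail (s + t) :=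
    (hnormTail_int.comp_add_right t).const_mul M
  have hpointwise : ∀ s, ‖A (s + t) (f s)‖ ≤ M * normTail (s + t) := by
    intro s
    rcases lt_or_ge s p with hs | hs
    · rw [hf_lt s hs, map_zero, norm_zero]
      exact mul_nonneg hM (hnormTail_nonneg _)
    · rw [show normTail (s + t) = ‖A (s + t)‖ from
        indicator_of_mem (mem_Ici.2 (by linarith)) _, mul_comm]
      exact (A (s + t)).le_opNorm_of_le (hf_ge s hs)
  calc ‖∫ s in S, A (s + t) (f s)‖
      ≤ ∫ s in S, M * normTail (s + t) :=
        norm_integral_le_of_norm_le hbound_int.integrableOn (.of_forall hpointwise)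
    _ ≤ ∫ s, M * normTail (s + t) :=
        setIntegral_le_integral hbound_int (.of_forall fun s => mul_nonneg hM (hnormTail_nonneg _))
    _ = M * ∫ u in Ici (p + t), ‖A u‖ := by
        rw [integral_const_mul, integral_add_right_eq_self (fun u => normTail u) t,
          integral_indicator measurableSet_Ici]
    _ ≤ M * ∫ u in Ici p, ‖A u‖ :=
        mul_le_mul_of_nonneg_left (setIntegral_mono_set hA_norm
          (.of_forall fun u => norm_nonneg _) (Ici_subset_Ici.2 hpt).eventuallyLE) hM

end ShiftedKernel

/-- Approachability: for bounded histories `H` and `H'`,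
`d(H_p∗H', H) → 0` as `p → ∞`, where `H_p∗H'` is the concatenation of the process
generated by `H` on `[0,p)` with `H'`. -/
theorem hdist_approachability {k : ℕ} (G G' : ℝ → (V k →L[ℝ] V k))
    (hG : IsRelaxation G G') (H H' : ℝ → V k)
    (hH : IsHistory H) (hH' : IsHistory H') :
    Tendsto (fun p : ℝ => hdist G' (prolong p H H') H) atTop (𝓝 0) := by
  obtain ⟨C, hC⟩ := hH.exists_norm_le
  obtain ⟨C', hC'⟩ := hH'.exists_norm_le
  set tail : ℝ → ℝ := fun p => ∫ u in Ici p, ‖G' u‖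
  have hbound : ∀ p, 0 ≤ p →
      hdist G' (prolong p H H') H ≤ ENNReal.ofReal (3 * ((C' + C) * tail p)) := by
    intro p hp
    refine hdist_le_ofReal fun t ht => (vnorm_le_three_mul_norm _).trans ?_
    gcongr
    refine norm_setIntegral_apply_comp_add_le _ (hG.integrable.mono_set (Ici_subset_Ici.2 hp))
      ht.le (fun s hs => by rw [prolong_of_lt hs, sub_self]) fun s hs => ?_
    rw [prolong_of_le hs]
    exact (norm_sub_le _ _).trans (add_le_add (hC' _ (by linarith)) (hC s (by linarith)))
  have htail : Tendsto (fun p => ENNReal.ofReal (3 * ((C' + C) * tail p))) atTop (𝓝 0) := by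
    simpa using ENNReal.tendsto_ofReal
      (((tendsto_integral_Ici_zero tendsto_id).const_mul (C' + C)).const_mul 3)
  exact tendsto_of_tendsto_of_tendsto_of_le_of_le' tendsto_const_nhds htail
    (.of_forall fun _ => zero_le) ((eventually_ge_atTop 0).mono hbound)
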